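/- arXiv:2305.00276 — 2 statements merged into one kernel-verified Lean document; each statement's English description precedes it below -/
import Mathlib

section
/- Suppose c₂=2 and p^{(2,2)}_{(1,p−1),(1,s−1)}≠0 for some (1,p−1),(1,s−1)∈∂̃(Γ) with (2,2)∈∂̃(Γ). Then p=s, and moreover exactly one of the following holds: (i) p=2 and p^{(2,2)}_{(1,1),(1,1)}=2; (ii) p∈{3,4} and p^{(2,2)}_{(1,p−1),(1,p−1)}=1. -/
namespace Paper

/-- A digraph: a set of vertices together with a set of arcs (ordered pairs of
distinct vertices). -/
structure Digraph (V : Type*) where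
  Adj : V → V → Prop
  loopless : ∀ v : V, ¬ Adj v v

variable {V V' : Type*}

namespace Digraph

/-- There is a directed walk of length `n` from `x` to `y`. -/
def HasPath (G : Digraph V) (x y : V) (n : ℕ) : Prop :=
  ∃ f : ℕ → V, f 0 = x ∧ f n = y ∧ ∀ k < n, G.Adj (f k) (f (k + 1))

/-- The distance `∂(x,y)`: the length of a shortest directed path from `x` to `y`. -/
noncomputable def dist (G : Digraph V) (x y : V) : ℕ :=
  sInf {n | G.HasPath x y n}

/-- The two-way distance `∂̃(x,y) = (∂(x,y), ∂(y,x))`. -/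
noncomputable def tdist (G : Digraph V) (x y : V) : ℕ × ℕ :=
  (G.dist x y, G.dist y x)

/-- The two-way distance set `∂̃(Γ)`. -/
def tdSet (G : Digraph V) : Set (ℕ × ℕ) :=
  {p | ∃ x y : V, G.tdist x y = p}

def StronglyConnected (G : Digraph V) : Prop :=
  ∀ x y : V, ∃ n, G.HasPath x y n

/-- `P_{ĩ,j̃}(x,y)`: the set of `z` with `∂̃(x,z) = ĩ` and `∂̃(z,y) = j̃`. -/
def P (G : Digraph V) (i j : ℕ × ℕ) (x y : V) : Set V :=
  {z | G.tdist x z = i ∧ G.tdist z y = j}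

open Classical in
/-- The intersection number `p^{h̃}_{ĩ,j̃}`, defined using an arbitrarily chosen
pair at two-way distance `h̃` (and `0` if there is no such pair). -/
noncomputable def p (G : Digraph V) (h i j : ℕ × ℕ) : ℕ :=
  if hh : ∃ xy : V × V, G.tdist xy.1 xy.2 = h then
    Nat.card (G.P i j hh.choose.1 hh.choose.2)
  else 0

/-- A weakly distance-regular digraph: strongly connected, and
`|P_{ĩ,j̃}(x,y)|` depends only on `∂̃(x,y)`, `ĩ` and `j̃`. -/
def IsWDR (G : Digraph V) : Prop :=
  G.StronglyConnected ∧
    ∀ (i j : ℕ × ℕ) (x y : V), Nat.card (G.P i j x y) = G.p (G.tdist x y) i j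

/-- Commutativity: `p^{h̃}_{ĩ,j̃} = p^{h̃}_{j̃,ĩ}` for all `h̃,ĩ,j̃ ∈ ∂̃(Γ)`. -/
def IsCommutative (G : Digraph V) : Prop :=
  ∀ h i j : ℕ × ℕ, h ∈ G.tdSet → i ∈ G.tdSet → j ∈ G.tdSet → G.p h i j = G.p h j i

/-- `Γ` is an undirected graph, i.e. its arc set is symmetric. -/
def IsUndirected (G : Digraph V) : Prop :=
  ∀ x y : V, G.Adj x y → G.Adj y x

def IsSemicomplete (G : Digraph V) : Prop :=
  ∀ x y : V, x ≠ y → (G.Adj x y ∨ G.Adj y x)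

/-- `Γ` is a complete (undirected) graph. -/
def IsCompleteDigraph (G : Digraph V) : Prop :=
  ∀ x y : V, x ≠ y → (G.Adj x y ∧ G.Adj y x)

/-- The underlying graph of a digraph. -/
def underlying (G : Digraph V) : SimpleGraph V where
  Adj x y := G.Adj x y ∨ G.Adj y x
  symm := ⟨fun _ _ h => h.symm⟩
  loopless := ⟨fun x h => h.elim (G.loopless x) (G.loopless x)⟩

/-- The diameter: the maximum value of the distance function. -/
noncomputable def diameter (G : Digraph V) : ℕ :=
  sSup {n | ∃ x y : V, G.dist x y = n}

/-- The girth: the length of a shortest circuit. -/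
noncomputable def girth (G : Digraph V) : ℕ :=
  sInf {n | 0 < n ∧ ∃ x : V, G.HasPath x x n}

/-- Number of out-neighbours `d⁺(x)`. -/
noncomputable def outDeg (G : Digraph V) (x : V) : ℕ := Nat.card {y | G.Adj x y}

/-- Number of in-neighbours `d⁻(x)`. -/
noncomputable def inDeg (G : Digraph V) (x : V) : ℕ := Nat.card {y | G.Adj y x}

def IsIsomorphicTo (G : Digraph V) (G' : Digraph V') : Prop :=
  ∃ e : V ≃ V', ∀ x y : V, G.Adj x y ↔ G'.Adj (e x) (e y)

/-- The Cartesian product of two digraphs. -/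
def box (G : Digraph V) (G' : Digraph V') : Digraph (V × V') where
  Adj x y := (x.1 = y.1 ∧ G'.Adj x.2 y.2) ∨ (G.Adj x.1 y.1 ∧ x.2 = y.2)
  loopless := fun v h => h.elim (fun h' => G'.loopless v.2 h'.2) (fun h' => G.loopless v.1 h'.1)

/-- Two digraphs have the same intersection numbers. -/
def SameIntersectionNumbers (G : Digraph V) (G' : Digraph V') : Prop :=
  G.tdSet = G'.tdSet ∧
    ∀ h i j : ℕ × ℕ, h ∈ G.tdSet → i ∈ G.tdSet → j ∈ G.tdSet → G.p h i j = G'.p h i j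

/-- Induced subdigraph on a set of vertices. -/
def induce (G : Digraph V) (s : Set V) : Digraph s where
  Adj x y := G.Adj x.1 y.1
  loopless := fun v h => G.loopless v.1 h

end Digraph

/-- The Cartesian product of a family of digraphs. -/
def piBox {ι : Type*} {W : ι → Type*} (G : ∀ i, Digraph (W i)) : Digraph (∀ i, W i) where
  Adj x y := ∃ i, (G i).Adj (x i) (y i) ∧ ∀ j, j ≠ i → x j = y j
  loopless := by
    rintro v ⟨i, hi, -⟩
    exact (G i).loopless _ hi

/-- The Cayley digraph `Cay(A,S)` of an additive group (for `S ⊆ A ∖ {0}`). -/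
def Cay (A : Type*) [AddGroup A] (S : Set A) : Digraph A where
  Adj x y := x ≠ y ∧ y - x ∈ S
  loopless := fun _ h => h.1 rfl

/-- The Cayley graph of an additive group with respect to a symmetric connection set. -/
def cayleyGraph (A : Type*) [AddGroup A] (S : Set A) : SimpleGraph A where
  Adj x y := x ≠ y ∧ (y - x ∈ S ∨ x - y ∈ S)
  symm := ⟨fun _ _ h => ⟨h.1.symm, h.2.symm⟩⟩
  loopless := ⟨fun _ h => h.1 rfl⟩

/-- The Hamming graph `H(ι, S)`: vertices are tuples, adjacent iff they differ in
exactly one coordinate. -/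
def hammingGraph (ι : Type*) (S : Type*) : SimpleGraph (ι → S) where
  Adj x y := ∃ i, x i ≠ y i ∧ ∀ j, j ≠ i → x j = y j
  symm := by
    refine ⟨?_⟩
    rintro x y ⟨i, h1, h2⟩
    exact ⟨i, h1.symm, fun j hj => (h2 j hj).symm⟩
  loopless := by
    refine ⟨?_⟩
    rintro x ⟨i, h1, -⟩
    exact h1 rfl

/-- The folded `n`-cube: vertices are `(n-1)`-tuples over `ℤ₂`, adjacent iff they
differ in exactly one coordinate or in all `n-1` coordinates. -/
def foldedCube (n : ℕ) : SimpleGraph (Fin (n - 1) → ZMod 2) where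
  Adj x y := (∃ i, x i ≠ y i ∧ ∀ j, j ≠ i → x j = y j) ∨ (x ≠ y ∧ ∀ j, x j ≠ y j)
  symm := by
    refine ⟨?_⟩
    rintro x y (⟨i, h1, h2⟩ | ⟨h1, h2⟩)
    · exact Or.inl ⟨i, h1.symm, fun j hj => (h2 j hj).symm⟩
    · exact Or.inr ⟨h1.symm, fun j => (h2 j).symm⟩
  loopless := by
    refine ⟨?_⟩
    rintro x (⟨i, h1, -⟩ | ⟨h1, -⟩)
    · exact h1 rfl
    · exact h1 rfl

/-- The Cartesian product of a family of simple graphs. -/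
def piBoxGraph {ι : Type*} {W : ι → Type*} (G : ∀ i, SimpleGraph (W i)) :
    SimpleGraph (∀ i, W i) where
  Adj x y := ∃ i, (G i).Adj (x i) (y i) ∧ ∀ j, j ≠ i → x j = y j
  symm := by
    refine ⟨?_⟩
    rintro x y ⟨i, h1, h2⟩
    exact ⟨i, (G i).adj_symm h1, fun j hj => (h2 j hj).symm⟩
  loopless := by
    refine ⟨?_⟩
    rintro x ⟨i, h1, -⟩
    exact (G i).loopless.irrefl _ h1

/-- The Shrikhande graph `Cay(ℤ₄ × ℤ₄, {±(1,0), ±(0,1), ±(1,1)})`. -/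
def shrikhande : SimpleGraph (ZMod 4 × ZMod 4) :=
  cayleyGraph (ZMod 4 × ZMod 4) {(1, 0), (-1, 0), (0, 1), (0, -1), (1, 1), (-1, -1)}

/-- The Doob graph `G(d₁, d₂)`: the Cartesian product of `d₁` copies of the
Shrikhande graph with the Hamming graph `H(d₂, 4)`. -/
def doobGraph (d₁ d₂ : ℕ) :
    SimpleGraph ((Fin d₁ → ZMod 4 × ZMod 4) × (Fin d₂ → ZMod 4)) :=
  (piBoxGraph fun _ : Fin d₁ => shrikhande).boxProd (hammingGraph (Fin d₂) (ZMod 4))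

/-- `c_i(x,y)`: the number of neighbours of `y` at distance `i - 1` from `x`. -/
noncomputable def cNum (G : SimpleGraph V) (i : ℕ) (x y : V) : ℕ :=
  Nat.card {z : V | G.Adj y z ∧ G.dist x z = i - 1}

/-- `a_i(x,y)`: the number of neighbours of `y` at distance `i` from `x`. -/
noncomputable def aNum (G : SimpleGraph V) (i : ℕ) (x y : V) : ℕ :=
  Nat.card {z : V | G.Adj y z ∧ G.dist x z = i}

/-- `b_i(x,y)`: the number of neighbours of `y` at distance `i + 1` from `x`. -/
noncomputable def bNum (G : SimpleGraph V) (i : ℕ) (x y : V) : ℕ :=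
  Nat.card {z : V | G.Adj y z ∧ G.dist x z = i + 1}

/-- A distance-regular graph. -/
def IsDRG (G : SimpleGraph V) : Prop :=
  G.Connected ∧
    ∀ (i : ℕ) (x y x' y' : V), G.dist x y = i → G.dist x' y' = i →
      cNum G i x y = cNum G i x' y' ∧ bNum G i x y = bNum G i x' y'

/-- A distance-transitive graph. -/
def IsDistanceTransitive (G : SimpleGraph V) : Prop :=
  G.Connected ∧
    ∀ x y x' y' : V, G.dist x y = G.dist x' y' → ∃ σ : G ≃g G, σ x = x' ∧ σ y = y'

/-- The vertex set of `Γ_i(α)`: all tuples obtained from `α` by inserting an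
arbitrary element of `S` in the `i`-th coordinate. -/
def lineSet {n : ℕ} {S : Type*} (i : Fin (n + 1)) (α : Fin n → S) : Set (Fin (n + 1) → S) :=
  Set.range fun b : S => i.insertNth b α

/-- The induced subdigraph `Γ_i(α)`. -/
def Digraph.line {n : ℕ} {S : Type*} (Γ : Digraph (Fin (n + 1) → S)) (i : Fin (n + 1))
    (α : Fin n → S) : Digraph (lineSet i α) :=
  Γ.induce (lineSet i α)

/-- Pad a tuple of length `m` with the entry `o` to a tuple of length `d`. -/
def pad {S : Type*} (o : S) (d m : ℕ) (α : Fin m → S) : Fin d → S :=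
  fun j => if h : j.1 < m then α ⟨j.1, h⟩ else o

/-- The digraph `Γ^{[m]}` on `S^m`: `(α,β)` is an arc iff the padded tuples form
an arc of `Γ`. -/
def Digraph.trunc {S : Type*} {d : ℕ} (Γ : Digraph (Fin d → S)) (o : S) (m : ℕ) :
    Digraph (Fin m → S) where
  Adj α β := Γ.Adj (pad o d m α) (pad o d m β)
  loopless := fun _ h => Γ.loopless _ h

/-- The digraph `Γ^i` on `S`: `(a,b)` is an arc iff the tuples with `a` resp. `b`
in the `i`-th coordinate and `o` elsewhere form an arc of `Γ`. -/
def Digraph.coordDigraph {S : Type*} {d : ℕ} (Γ : Digraph (Fin d → S)) (o : S) (i : Fin d) :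
    Digraph S where
  Adj a b := Γ.Adj (Function.update (fun _ => o) i a) (Function.update (fun _ => o) i b)
  loopless := fun _ h => Γ.loopless _ h

/-- The set `T = S^{m-1} × {(o,…,o)}` (as a subset of `S^{d-1}`, here `d = n+1`). -/
def Tset {n : ℕ} (S : Type*) (o : S) (m : ℕ) : Set (Fin n → S) :=
  {α | ∀ j : Fin n, m - 1 ≤ j.1 → α j = o}

end Paper

/-!
Fix `x, y` with `∂̃(x,y) = (2,2)` and write `c i j = p^{(2,2)}_{i,j}`. A vertex whose two-way
distances from `x` and to `y` both contain a `1` is a common neighbour of `x` and `y` in `Σ`, and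
vertices of different types are different, so the `c i j` over such types sum to at most
`c₂ = 2`. The function `c` is invariant under `(i, j) ↦ (j, i)` (commutativity) and under
`(i, j) ↦ (j*, i*)`, where `*` swaps the two entries (read the pair from `y` to `x`).
If `c (1,p-1) (1,s-1) ≠ 0` with `p ≠ s`, its orbit has three types, which is too many.
For `p = s ≠ 2` the orbit has two types, so the number is `1`. For `p = 2` every other type would
come with a second one of its orbit, so both common neighbours have type `((1,1),(1,1))`.
Finally `p - 1 = ∂(z,x) ≤ ∂(z,y) + ∂(y,x) = 3`.
-/

namespace Paper

def IsAdjTDist (i : ℕ × ℕ) : Prop :=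
  i.1 = 1 ∨ i.2 = 1

theorem isAdjTDist_swap {i : ℕ × ℕ} : IsAdjTDist i.swap ↔ IsAdjTDist i :=
  or_comm

/-- The properties of `c i j = p^{(2,2)}_{i,j}` that hold when `c₂ = 2`; `c j.swap i.swap`
counts the same vertices as `c i j`, seen from the reversed pair `(y, x)`. -/
structure IsC2Profile (c : ℕ × ℕ → ℕ × ℕ → ℕ) : Prop where
  comm : ∀ i j, c i j = c j i
  swap_swap : ∀ i j, c j.swap i.swap = c i j
  sum_le_two : ∀ T : Finset ((ℕ × ℕ) × (ℕ × ℕ)),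
    (∀ t ∈ T, IsAdjTDist t.1 ∧ IsAdjTDist t.2) → ∑ t ∈ T, c t.1 t.2 ≤ 2

namespace IsC2Profile

variable {c : ℕ × ℕ → ℕ × ℕ → ℕ}

theorem add_add_le_two (hc : IsC2Profile c) {t₁ t₂ t₃ : (ℕ × ℕ) × (ℕ × ℕ)}
    (h₁ : IsAdjTDist t₁.1 ∧ IsAdjTDist t₁.2) (h₂ : IsAdjTDist t₂.1 ∧ IsAdjTDist t₂.2)
    (h₃ : IsAdjTDist t₃.1 ∧ IsAdjTDist t₃.2) (h₁₂ : t₁ ≠ t₂) (h₁₃ : t₁ ≠ t₃) (h₂₃ : t₂ ≠ t₃) :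
    c t₁.1 t₁.2 + c t₂.1 t₂.2 + c t₃.1 t₃.2 ≤ 2 := by
  have hsum := hc.sum_le_two {t₁, t₂, t₃} (by simp [h₁, h₂, h₃])
  rwa [Finset.sum_insert (by simp [h₁₂, h₁₃]), Finset.sum_pair h₂₃, ← add_assoc] at hsum

theorem eq_of_ne_zero (hc : IsC2Profile c) {a b : ℕ} (hne : c (1, a) (1, b) ≠ 0) : a = b := by
  by_contra hab
  have h₃ := hc.add_add_le_two (t₁ := ((1, a), (1, b))) (t₂ := ((1, b), (1, a)))
    (t₃ := ((b, 1), (a, 1))) (by simp [IsAdjTDist]) (by simp [IsAdjTDist]) (by simp [IsAdjTDist])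
    (by simp [hab]) (by simp; omega) (by simp; omega)
  have hswap : c (b, 1) (a, 1) = c (1, a) (1, b) := hc.swap_swap (1, a) (1, b)
  simp only [hc.comm (1, b), hswap] at h₃
  omega

theorem eq_one (hc : IsC2Profile c) {a : ℕ} (hne : c (1, a) (1, a) ≠ 0) (ha : a ≠ 1) :
    c (1, a) (1, a) = 1 := by
  have h₂ := hc.sum_le_two {((1, a), (1, a)), ((a, 1), (a, 1))} (by simp [IsAdjTDist])
  have hswap : c (a, 1) (a, 1) = c (1, a) (1, a) := hc.swap_swap (1, a) (1, a)
  rw [Finset.sum_pair (by simp [ha])] at h₂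
  simp only [hswap] at h₂
  omega

theorem eq_zero_of_ne (hc : IsC2Profile c) (h₁₁ : c (1, 1) (1, 1) ≠ 0) {i j : ℕ × ℕ}
    (hi : IsAdjTDist i) (hj : IsAdjTDist j) (hij : (i, j) ≠ ((1, 1), (1, 1))) : c i j = 0 := by
  by_contra hne
  rcases eq_or_ne i j with rfl | hij'
  · have hi_swap : i.swap ≠ i := by
      obtain ⟨i₁, i₂⟩ := i
      simp only [IsAdjTDist, Prod.swap_prod_mk, ne_eq, Prod.ext_iff] at hi hij ⊢
      omega
    have h₃ := hc.add_add_le_two (t₁ := ((1, 1), (1, 1))) (t₂ := (i, i)) (t₃ := (i.swap, i.swap))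
      (by simp [IsAdjTDist]) ⟨hi, hi⟩ ⟨isAdjTDist_swap.2 hi, isAdjTDist_swap.2 hi⟩ hij.symm
      (by obtain ⟨i₁, i₂⟩ := i; simp only [Prod.swap_prod_mk, ne_eq, Prod.ext_iff] at hij ⊢; omega)
      (by simpa using hi_swap.symm)
    have hci : c i.swap i.swap = c i i := hc.swap_swap i i
    dsimp only at h₃
    omega
  · have h₃ := hc.add_add_le_two (t₁ := ((1, 1), (1, 1))) (t₂ := (i, j)) (t₃ := (j, i))
      (by simp [IsAdjTDist]) ⟨hi, hj⟩ ⟨hj, hi⟩ hij.symm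
      (by obtain ⟨i₁, i₂⟩ := i; obtain ⟨j₁, j₂⟩ := j; simp only [ne_eq, Prod.ext_iff] at hij ⊢; omega)
      (by simp [hij'])
    have hcij : c i j = c j i := hc.comm i j
    dsimp only at h₃
    omega

end IsC2Profile

namespace Digraph

variable {V : Type*} {Γ : Digraph V} {x y z : V} {h i j : ℕ × ℕ}

theorem HasPath.cons {n : ℕ} (hxy : Γ.Adj x y) (hyz : Γ.HasPath y z n) :
    Γ.HasPath x z (n + 1) := by
  obtain ⟨f, hf0, hfn, hf⟩ := hyz
  refine ⟨fun k => if k = 0 then x else f (k - 1), rfl, by simpa using hfn, ?_⟩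
  rintro (_ | k) hk
  · simpa [hf0] using hxy
  · simpa using hf k (by omega)

theorem dist_le_of_hasPath {n : ℕ} (hxy : Γ.HasPath x y n) : Γ.dist x y ≤ n :=
  Nat.sInf_le hxy

theorem tdist_swap (Γ : Digraph V) (x y : V) : (Γ.tdist x y).swap = Γ.tdist y x :=
  rfl

namespace StronglyConnected

theorem hasPath_dist (hsc : Γ.StronglyConnected) (x y : V) : Γ.HasPath x y (Γ.dist x y) :=
  Nat.sInf_mem (hsc x y)

theorem dist_eq_zero_iff (hsc : Γ.StronglyConnected) : Γ.dist x y = 0 ↔ x = y := by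
  refine ⟨fun h0 => ?_, ?_⟩
  · obtain ⟨f, hf0, hfn, -⟩ := hsc.hasPath_dist x y
    rw [← hf0, ← hfn, h0]
  · rintro rfl
    exact Nat.le_zero.mp (dist_le_of_hasPath ⟨fun _ => x, rfl, rfl, by simp⟩)

theorem dist_eq_one_iff_adj (hsc : Γ.StronglyConnected) : Γ.dist x y = 1 ↔ Γ.Adj x y := by
  refine ⟨fun h1 => ?_, fun hxy => ?_⟩
  · obtain ⟨f, hf0, hf1, hf⟩ := hsc.hasPath_dist x y
    rw [h1] at hf1 hf
    simpa [hf0, hf1] using hf 0 one_pos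
  · have hle : Γ.dist x y ≤ 1 := dist_le_of_hasPath (.cons hxy ⟨fun _ => y, rfl, rfl, by simp⟩)
    have hne : Γ.dist x y ≠ 0 := fun h0 => Γ.loopless y ((hsc.dist_eq_zero_iff.mp h0) ▸ hxy)
    omega

theorem dist_le_succ_of_adj (hsc : Γ.StronglyConnected) (hxy : Γ.Adj x y) (z : V) :
    Γ.dist x z ≤ Γ.dist y z + 1 :=
  dist_le_of_hasPath (.cons hxy (hsc.hasPath_dist y z))

theorem underlying_adj_iff (hsc : Γ.StronglyConnected) :
    Γ.underlying.Adj x y ↔ IsAdjTDist (Γ.tdist x y) := by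
  simp only [underlying, IsAdjTDist, tdist, hsc.dist_eq_one_iff_adj]

theorem underlying_dist_eq_two (hsc : Γ.StronglyConnected) (hxy : Γ.tdist x y = (2, 2)) :
    Γ.underlying.dist x y = 2 := by
  have hd : Γ.dist x y = 2 := congrArg Prod.fst hxy
  obtain ⟨f, hf0, hf2, hf⟩ := hsc.hasPath_dist x y
  rw [hd] at hf2 hf
  have hx1 : Γ.underlying.Adj x (f 1) := Or.inl (by simpa [hf0] using hf 0 (by omega))
  have h1y : Γ.underlying.Adj (f 1) y := Or.inl (by simpa [hf2] using hf 1 (by omega))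
  let w : Γ.underlying.Walk x y := .cons hx1 (.cons h1y .nil)
  have hle : Γ.underlying.dist x y ≤ 2 := SimpleGraph.dist_le w
  have hne0 : Γ.underlying.dist x y ≠ 0 := by
    rw [ne_eq, w.reachable.dist_eq_zero_iff, ← hsc.dist_eq_zero_iff, hd]
    omega
  have hne1 : Γ.underlying.dist x y ≠ 1 := by
    rw [ne_eq, SimpleGraph.dist_eq_one_iff_adj, hsc.underlying_adj_iff, hxy, IsAdjTDist]
    omega
  omega

theorem mem_commonNeighbors_iff (hsc : Γ.StronglyConnected) :
    z ∈ Γ.underlying.commonNeighbors x y ↔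
      IsAdjTDist (Γ.tdist x z) ∧ IsAdjTDist (Γ.tdist z y) := by
  rw [SimpleGraph.mem_commonNeighbors, Γ.underlying.adj_comm y, hsc.underlying_adj_iff,
    hsc.underlying_adj_iff]

end StronglyConnected

theorem P_swap (i j : ℕ × ℕ) (x y : V) : Γ.P j.swap i.swap y x = Γ.P i j x y := by
  ext z
  change Γ.tdist y z = _ ∧ Γ.tdist z x = _ ↔ _
  rw [← Γ.tdist_swap z y, ← Γ.tdist_swap x z, Prod.swap_inj, Prod.swap_inj, and_comm]
  rfl

theorem exists_mem_P_of_p_ne_zero (hp : Γ.p h i j ≠ 0) :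
    ∃ x y z, Γ.tdist x y = h ∧ z ∈ Γ.P i j x y := by
  unfold p at hp
  split_ifs at hp with hh
  · obtain ⟨⟨z, hz⟩, -⟩ := Nat.card_ne_zero.mp hp
    exact ⟨_, _, z, hh.choose_spec, hz⟩
  · exact (hp rfl).elim

theorem mem_tdSet_of_p_ne_zero (hp : Γ.p h i j ≠ 0) :
    h ∈ Γ.tdSet ∧ i ∈ Γ.tdSet ∧ j ∈ Γ.tdSet := by
  obtain ⟨x, y, z, hxy, hxz, hzy⟩ := exists_mem_P_of_p_ne_zero hp
  exact ⟨⟨x, y, hxy⟩, ⟨x, z, hxz⟩, ⟨z, y, hzy⟩⟩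

theorem IsCommutative.p_comm (hcomm : Γ.IsCommutative) (h i j : ℕ × ℕ) :
    Γ.p h i j = Γ.p h j i := by
  by_cases hmem : h ∈ Γ.tdSet ∧ i ∈ Γ.tdSet ∧ j ∈ Γ.tdSet
  · exact hcomm h i j hmem.1 hmem.2.1 hmem.2.2
  · have hij : Γ.p h i j = 0 := by_contra fun hp => hmem (mem_tdSet_of_p_ne_zero hp)
    have hji : Γ.p h j i = 0 := by_contra fun hp => hmem (by
      obtain ⟨hh, hj, hi⟩ := mem_tdSet_of_p_ne_zero hp
      exact ⟨hh, hi, hj⟩)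
    rw [hij, hji]

namespace IsWDR

theorem p_ne_zero [Finite V] (hΓ : Γ.IsWDR) (hz : z ∈ Γ.P i j x y) :
    Γ.p (Γ.tdist x y) i j ≠ 0 := by
  rw [← hΓ.2]
  exact Nat.card_ne_zero.mpr ⟨⟨z, hz⟩, inferInstance⟩

theorem p_swap (hΓ : Γ.IsWDR) (x y : V) (i j : ℕ × ℕ) :
    Γ.p (Γ.tdist y x) j.swap i.swap = Γ.p (Γ.tdist x y) i j := by
  rw [← hΓ.2, ← hΓ.2, P_swap]

theorem sum_p_le_card_commonNeighbors [Finite V] (hΓ : Γ.IsWDR) (x y : V)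
    (T : Finset ((ℕ × ℕ) × (ℕ × ℕ))) (hT : ∀ t ∈ T, IsAdjTDist t.1 ∧ IsAdjTDist t.2) :
    ∑ t ∈ T, Γ.p (Γ.tdist x y) t.1 t.2 ≤ Nat.card (Γ.underlying.commonNeighbors x y) := by
  have hdisj : (T : Set ((ℕ × ℕ) × (ℕ × ℕ))).PairwiseDisjoint fun t => Γ.P t.1 t.2 x y := by
    intro t _ t' _ htt'
    exact Set.disjoint_left.mpr fun z hz hz' =>
      htt' (Prod.ext (hz.1.symm.trans hz'.1) (hz.2.symm.trans hz'.2))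
  have hsub : (⋃ t ∈ (T : Set ((ℕ × ℕ) × (ℕ × ℕ))), Γ.P t.1 t.2 x y) ⊆
      Γ.underlying.commonNeighbors x y := by
    simp only [Set.iUnion_subset_iff]
    rintro t ht z ⟨hxz, hzy⟩
    rw [hΓ.1.mem_commonNeighbors_iff, hxz, hzy]
    exact hT t ht
  calc ∑ t ∈ T, Γ.p (Γ.tdist x y) t.1 t.2 = ∑ t ∈ T, (Γ.P t.1 t.2 x y).ncard := by
        simp only [← hΓ.2, Nat.card_coe_set_eq]
    _ = (⋃ t ∈ (T : Set ((ℕ × ℕ) × (ℕ × ℕ))), Γ.P t.1 t.2 x y).ncard := by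
        rw [T.finite_toSet.ncard_biUnion (fun _ _ => Set.toFinite _) hdisj, finsum_mem_coe_finset]
    _ ≤ Nat.card (Γ.underlying.commonNeighbors x y) := by
        rw [Nat.card_coe_set_eq]
        exact Set.ncard_le_ncard hsub

theorem isC2Profile [Finite V] (hΓ : Γ.IsWDR) (hcomm : Γ.IsCommutative)
    (hxy : Γ.tdist x y = (2, 2)) (hN : Nat.card (Γ.underlying.commonNeighbors x y) = 2) :
    IsC2Profile (Γ.p (2, 2)) where
  comm := hcomm.p_comm (2, 2)
  swap_swap i j := by
    simpa [← Γ.tdist_swap x y, hxy] using hΓ.p_swap x y i j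
  sum_le_two T hT := by
    simpa [hxy, hN] using hΓ.sum_p_le_card_commonNeighbors x y T hT

theorem p_one_one_eq_card_commonNeighbors [Finite V] (hΓ : Γ.IsWDR)
    (hc : IsC2Profile (Γ.p (2, 2))) (hxy : Γ.tdist x y = (2, 2))
    (hne : Γ.p (2, 2) (1, 1) (1, 1) ≠ 0) :
    Γ.p (2, 2) (1, 1) (1, 1) = Nat.card (Γ.underlying.commonNeighbors x y) := by
  suffices Γ.P (1, 1) (1, 1) x y = Γ.underlying.commonNeighbors x y by
    rw [← this, hΓ.2, hxy]
  ext z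
  rw [hΓ.1.mem_commonNeighbors_iff]
  refine ⟨fun ⟨hxz, hzy⟩ => by simp [hxz, hzy, IsAdjTDist], fun ⟨hxz, hzy⟩ => ?_⟩
  by_contra hz
  refine hΓ.p_ne_zero (i := Γ.tdist x z) (j := Γ.tdist z y) ⟨rfl, rfl⟩ ?_
  rw [hxy]
  exact hc.eq_zero_of_ne hne hxz hzy fun h => hz ⟨congrArg Prod.fst h, congrArg Prod.snd h⟩

end IsWDR

end Digraph

theorem cNum_two_eq_card_commonNeighbors {V : Type*} (G : SimpleGraph V) (x y : V) :
    cNum G 2 x y = Nat.card (G.commonNeighbors x y) := by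
  simp only [cNum, SimpleGraph.commonNeighbors, Nat.add_one_sub_one,
    SimpleGraph.dist_eq_one_iff_adj, SimpleGraph.neighborSet, Set.inter_def, Set.mem_ofPred_eq,
    G.adj_comm y, and_comm]

end Paper

open Paper in
theorem lemma_s_eq_t_general {V : Type*} [Finite V] (Γ : Paper.Digraph V)
    (hwdr : Γ.IsWDR) (hcomm : Γ.IsCommutative)
    (hc2 : ∀ x y : V, Γ.underlying.dist x y = 2 → cNum Γ.underlying 2 x y = 2)
    (p s : ℕ)
    (hne : Γ.p (2, 2) (1, p - 1) (1, s - 1) ≠ 0) :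
    p = s ∧
      ((p = 2 ∧ Γ.p (2, 2) (1, 1) (1, 1) = 2) ∨
        ((p = 3 ∨ p = 4) ∧ Γ.p (2, 2) (1, p - 1) (1, p - 1) = 1)) := by
  obtain ⟨x, y, z, hxy, hxz, hzy⟩ := Digraph.exists_mem_P_of_p_ne_zero hne
  have hsc := hwdr.1
  have hN : Nat.card (Γ.underlying.commonNeighbors x y) = 2 := by
    rw [← cNum_two_eq_card_commonNeighbors]
    exact hc2 x y (hsc.underlying_dist_eq_two hxy)
  have hc := hwdr.isC2Profile hcomm hxy hN
  have hps : p - 1 = s - 1 := hc.eq_of_ne_zero hne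
  rw [← hps] at hne
  have hzx : Γ.dist z x = p - 1 := congrArg Prod.snd hxz
  have hp₁ : p - 1 ≠ 0 := by
    have hxz₁ : Γ.Adj x z := hsc.dist_eq_one_iff_adj.mp (congrArg Prod.fst hxz)
    rw [← hzx, ne_eq, hsc.dist_eq_zero_iff]
    rintro rfl
    exact Γ.loopless _ hxz₁
  have hp₃ : p - 1 ≤ 3 := by
    have hzy₁ : Γ.Adj z y := hsc.dist_eq_one_iff_adj.mp (congrArg Prod.fst hzy)
    simpa [hzx, show Γ.dist y x = 2 from congrArg Prod.snd hxy] using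
      hsc.dist_le_succ_of_adj hzy₁ x
  refine ⟨by omega, ?_⟩
  rcases eq_or_ne (p - 1) 1 with hp | hp
  · rw [hp] at hne
    exact Or.inl ⟨by omega, hN ▸ hwdr.p_one_one_eq_card_commonNeighbors hc hxy hne⟩
  · exact Or.inr ⟨by omega, hc.eq_one hne hp⟩

open Paper in
/-- **Lemma 3.1.** Suppose `c₂ = 2` and `p^{(2,2)}_{(1,p−1),(1,s−1)} ≠ 0`. Then
`p = s`, and either `p = 2` and `p^{(2,2)}_{(1,1),(1,1)} = 2`, or `p ∈ {3,4}` and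
`p^{(2,2)}_{(1,p−1),(1,p−1)} = 1`. -/
theorem lemma_s_eq_t {V : Type*} [Finite V] [Nonempty V] (Γ : Paper.Digraph V)
    (hwdr : Γ.IsWDR) (hcomm : Γ.IsCommutative)
    (hdrg : IsDRG Γ.underlying)
    (hc2 : ∀ x y : V, Γ.underlying.dist x y = 2 → cNum Γ.underlying 2 x y = 2)
    (p s : ℕ)
    (hp : ((1 : ℕ), p - 1) ∈ Γ.tdSet) (hs : ((1 : ℕ), s - 1) ∈ Γ.tdSet)
    (h22 : ((2 : ℕ), (2 : ℕ)) ∈ Γ.tdSet)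
    (hne : Γ.p (2, 2) (1, p - 1) (1, s - 1) ≠ 0) :
    p = s ∧
      ((p = 2 ∧ Γ.p (2, 2) (1, 1) (1, 1) = 2) ∨
        ((p = 3 ∨ p = 4) ∧ Γ.p (2, 2) (1, p - 1) (1, p - 1) = 1)) :=
  lemma_s_eq_t_general Γ hwdr hcomm hc2 p s hne
end

section
/- Suppose q>2. Then for every 1≤i≤d, every α∈S^{d−1}, and all x,y∈V(Γᵢ(α)), one has d⁺_{Γᵢ(α)}(x)=d⁺_{Γᵢ(α)}(y) and d⁻_{Γᵢ(α)}(x)=d⁻_{Γᵢ(α)}(y). -/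
/-!
Let `x ≠ y` be vertices of a line `L = V(Γᵢ(α))`. In the Hamming graph `L` is a maximal clique,
so an out-neighbour `z` of `x` lies on `L` iff `z = y` or `z` is adjacent to `y` in the
underlying graph. Hence the out-degree of `x` in `Γᵢ(α)` is the sum of the intersection numbers
`p^{∂̃(x,y)}_{ĩ,j̃}` over the pairs with `ĩ = (1, _)` and `j̃ ∈ {(0,0), (1,_), (_,1)}`, and the
in-degree of `y` is the same sum with `ĩ` and `j̃` exchanged; by commutativity the two agree.
As `q > 2`, any two vertices of `L` share a third vertex `w` of `L`, and both have out-degree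
(in-degree) equal to the in-degree (out-degree) of `w`.
-/

namespace Paper

variable {V : Type*}

open Finset

namespace Digraph

theorem hasPath_zero_iff (G : Digraph V) {x y : V} : G.HasPath x y 0 ↔ x = y := by
  constructor
  · rintro ⟨f, rfl, rfl, -⟩
    rfl
  · rintro rfl
    exact ⟨fun _ => x, rfl, rfl, fun k hk => absurd hk k.not_lt_zero⟩

theorem hasPath_one_iff (G : Digraph V) {x y : V} : G.HasPath x y 1 ↔ G.Adj x y := by
  constructor
  · rintro ⟨f, rfl, rfl, hf⟩
    exact hf 0 one_pos
  · intro h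
    refine ⟨fun k => if k = 0 then x else y, rfl, rfl, fun k hk => ?_⟩
    obtain rfl := Nat.lt_one_iff.mp hk
    simpa using h

theorem dist_eq_zero_iff (G : Digraph V) (hG : G.StronglyConnected) {x y : V} :
    G.dist x y = 0 ↔ x = y := by
  rw [← G.hasPath_zero_iff]
  exact ⟨fun h => h ▸ Nat.sInf_mem (hG x y), fun h => Nat.sInf_eq_zero.mpr (Or.inl h)⟩

theorem dist_eq_one_iff (G : Digraph V) {x y : V} : G.dist x y = 1 ↔ G.Adj x y := by
  rw [← G.hasPath_one_iff]
  constructor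
  · intro h
    have hne : {n | G.HasPath x y n}.Nonempty := by
      by_contra hemp
      simp [dist, Set.not_nonempty_iff_eq_empty.mp hemp] at h
    exact h ▸ Nat.sInf_mem hne
  · intro h
    refine le_antisymm (Nat.sInf_le h) (Nat.one_le_iff_ne_zero.mpr fun h0 => ?_)
    rcases Nat.sInf_eq_zero.mp h0 with h0 | h0
    · obtain rfl := G.hasPath_zero_iff.mp h0
      exact G.loopless x (G.hasPath_one_iff.mp h)
    · exact h0.subset h

theorem tdist_eq_zero_iff (G : Digraph V) (hG : G.StronglyConnected) {x y : V} :
    G.tdist x y = (0, 0) ↔ x = y := by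
  rw [tdist, Prod.mk.injEq, G.dist_eq_zero_iff hG, G.dist_eq_zero_iff hG, eq_comm (a := y),
    and_self]

theorem tdist_eq_zero_or_one_iff (G : Digraph V) (hG : G.StronglyConnected) {x y : V} :
    (G.tdist x y = (0, 0) ∨ (G.tdist x y).1 = 1 ∨ (G.tdist x y).2 = 1) ↔
      x = y ∨ G.underlying.Adj x y := by
  rw [G.tdist_eq_zero_iff hG, tdist, G.dist_eq_one_iff, G.dist_eq_one_iff]
  rfl

theorem card_P_comm (G : Digraph V) (hwdr : G.IsWDR) (hcomm : G.IsCommutative)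
    (a b : ℕ × ℕ) (x y : V) : Nat.card (G.P a b x y) = Nat.card (G.P b a x y) := by
  have hempty : ∀ a b, ¬(a ∈ G.tdSet ∧ b ∈ G.tdSet) → G.P a b x y = ∅ := fun a b hab =>
    Set.eq_empty_of_forall_notMem fun z ⟨hxz, hzy⟩ => hab ⟨⟨x, z, hxz⟩, ⟨z, y, hzy⟩⟩
  by_cases hab : a ∈ G.tdSet ∧ b ∈ G.tdSet
  · rw [hwdr.2, hwdr.2, hcomm _ _ _ ⟨x, y, rfl⟩ hab.1 hab.2]
  · rw [hempty a b hab, hempty b a (hab ∘ And.symm)]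

theorem card_setOf_eq_sum_card_P [Fintype V] (G : Digraph V)
    (c : (ℕ × ℕ) × (ℕ × ℕ) → Prop) [DecidablePred c] (D : Finset (ℕ × ℕ))
    (hD : ∀ u v, G.tdist u v ∈ D) (x y : V) :
    Nat.card {z | c (G.tdist x z, G.tdist z y)} =
      ∑ k ∈ (D ×ˢ D).filter c, Nat.card (G.P k.1 k.2 x y) := by
  classical
  let f : V → (ℕ × ℕ) × (ℕ × ℕ) := fun z => (G.tdist x z, G.tdist z y)
  have hcard : ∀ p : V → Prop, Nat.card {z | p z} = #{z | p z} := fun p => by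
    rw [Nat.card_eq_fintype_card, Fintype.card_subtype]
    rfl
  rw [hcard, card_eq_sum_card_fiberwise (f := f) (t := (D ×ˢ D).filter c)]
  · refine sum_congr rfl fun k hk => ?_
    rw [P, hcard]
    congr 1
    ext z
    have hc : f z = k → c (f z) := fun h => h ▸ (mem_filter.mp hk).2
    simp only [mem_filter, mem_univ, true_and]
    exact (and_iff_right_of_imp hc).trans Prod.ext_iff
  · intro z hz
    simp only [coe_filter, mem_univ, true_and, Set.mem_ofPred_eq] at hz
    exact mem_filter.mpr ⟨mem_product.mpr ⟨hD x z, hD z y⟩, hz⟩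

theorem card_setOf_tdist_comm [Finite V] (G : Digraph V) (hwdr : G.IsWDR)
    (hcomm : G.IsCommutative) (c : ℕ × ℕ → ℕ × ℕ → Prop) (x y : V) :
    Nat.card {z | c (G.tdist x z) (G.tdist z y)} =
      Nat.card {z | c (G.tdist z y) (G.tdist x z)} := by
  classical
  have := Fintype.ofFinite V
  let D := univ.image fun p : V × V => G.tdist p.1 p.2
  have hD : ∀ u v, G.tdist u v ∈ D := fun u v => mem_image_of_mem _ (mem_univ (u, v))
  rw [G.card_setOf_eq_sum_card_P (fun k => c k.1 k.2) D hD,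
    G.card_setOf_eq_sum_card_P (fun k => c k.2 k.1) D hD]
  exact sum_equiv (Equiv.prodComm _ _) (by simp [and_comm])
    fun k _ => G.card_P_comm hwdr hcomm _ _ x y

theorem outDeg_induce (G : Digraph V) (s : Set V) (x : s) :
    (G.induce s).outDeg x = Nat.card {z | z ∈ s ∧ G.Adj x z} :=
  Nat.card_congr (Equiv.subtypeSubtypeEquivSubtypeInter (· ∈ s) (G.Adj x ·))

theorem inDeg_induce (G : Digraph V) (s : Set V) (x : s) :
    (G.induce s).inDeg x = Nat.card {z | z ∈ s ∧ G.Adj z x} :=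
  Nat.card_congr (Equiv.subtypeSubtypeEquivSubtypeInter (· ∈ s) (G.Adj · x))

end Digraph

section Line

variable {S : Type*} {n : ℕ} {i : Fin (n + 1)} {α : Fin n → S} {x y z : Fin (n + 1) → S}

theorem mem_lineSet_iff_of_mem (hx : x ∈ lineSet i α) :
    z ∈ lineSet i α ↔ ∀ j ≠ i, z j = x j := by
  obtain ⟨b, rfl⟩ := hx
  constructor
  · rintro ⟨c, rfl⟩ j hj
    obtain ⟨k, rfl⟩ := Fin.exists_succAbove_eq hj
    simp
  · intro h
    refine ⟨z i, funext fun j => ?_⟩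
    rcases eq_or_ne j i with rfl | hj
    · simp
    · obtain ⟨k, rfl⟩ := Fin.exists_succAbove_eq hj
      simpa using (h _ hj).symm

theorem apply_ne_of_mem_lineSet (hx : x ∈ lineSet i α) (hy : y ∈ lineSet i α) (hxy : x ≠ y) :
    x i ≠ y i := fun h =>
  hxy <| funext fun j => if hj : j = i then hj ▸ h else (mem_lineSet_iff_of_mem hy).mp hx j hj

theorem hammingGraph_adj_of_mem_lineSet (hx : x ∈ lineSet i α) (hy : y ∈ lineSet i α)
    (hxy : x ≠ y) : (hammingGraph (Fin (n + 1)) S).Adj x y :=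
  ⟨i, apply_ne_of_mem_lineSet hx hy hxy, (mem_lineSet_iff_of_mem hy).mp hx⟩

theorem mem_lineSet_iff_of_hammingGraph_adj (hx : x ∈ lineSet i α) (hy : y ∈ lineSet i α)
    (hxy : x ≠ y) (hxz : (hammingGraph (Fin (n + 1)) S).Adj x z) :
    z ∈ lineSet i α ↔ z = y ∨ (hammingGraph (Fin (n + 1)) S).Adj z y := by
  constructor
  · intro hz
    exact (eq_or_ne z y).imp_right (hammingGraph_adj_of_mem_lineSet hz hy)
  · rintro (rfl | ⟨j', hzyj', hzy⟩)
    · exact hy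
    obtain ⟨j, hxzj, hxz⟩ := hxz
    rw [mem_lineSet_iff_of_mem hx]
    suffices j = i by
      subst this
      exact fun k hk => (hxz k hk).symm
    by_contra hji
    have hzi : z i ≠ y i := hxz i (Ne.symm hji) ▸ apply_ne_of_mem_lineSet hx hy hxy
    obtain rfl : j' = i := by
      by_contra hj'
      exact hzi (hzy i (Ne.symm hj'))
    exact hxzj (((mem_lineSet_iff_of_mem hy).mp hx j hji).trans (hzy j hji).symm)

theorem card_out_lineSet_eq_card_in_lineSet [Finite S] (Γ : Digraph (Fin (n + 1) → S))
    (hwdr : Γ.IsWDR) (hcomm : Γ.IsCommutative)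
    (hund : Γ.underlying = hammingGraph (Fin (n + 1)) S)
    (hx : x ∈ lineSet i α) (hy : y ∈ lineSet i α) (hxy : x ≠ y) :
    Nat.card {z | z ∈ lineSet i α ∧ Γ.Adj x z} = Nat.card {z | z ∈ lineSet i α ∧ Γ.Adj z y} := by
  have hadj : ∀ {u v}, Γ.Adj u v → (hammingGraph (Fin (n + 1)) S).Adj u v := fun h =>
    hund ▸ Or.inl h
  have hout : {z | z ∈ lineSet i α ∧ Γ.Adj x z} =
      {z | Γ.Adj x z ∧ (z = y ∨ Γ.underlying.Adj z y)} := by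
    ext z
    rw [Set.mem_ofPred, Set.mem_ofPred, hund, and_comm]
    exact and_congr_right fun hxz => mem_lineSet_iff_of_hammingGraph_adj hx hy hxy (hadj hxz)
  have hin : {z | z ∈ lineSet i α ∧ Γ.Adj z y} =
      {z | Γ.Adj z y ∧ (x = z ∨ Γ.underlying.Adj x z)} := by
    ext z
    rw [Set.mem_ofPred, Set.mem_ofPred, hund, and_comm, @eq_comm _ x, SimpleGraph.adj_comm _ x]
    exact and_congr_right fun hzy =>
      mem_lineSet_iff_of_hammingGraph_adj hy hx hxy.symm (hadj hzy).symm
  have key := Γ.card_setOf_tdist_comm hwdr hcomm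
    (fun a b => a.1 = 1 ∧ (b = (0, 0) ∨ b.1 = 1 ∨ b.2 = 1)) x y
  simp only [Γ.tdist_eq_zero_or_one_iff hwdr.1] at key
  simp only [Digraph.tdist, Digraph.dist_eq_one_iff] at key
  rwa [hout, hin]

end Line

end Paper

open Paper in
/-- **Lemma 4.4.** If `q > 2`, then all vertices of `Γᵢ(α)` have the same
out-degree and the same in-degree in `Γᵢ(α)`. -/
theorem lemma_degree {S : Type*} [Finite S] {n : ℕ}
    (Γ : Paper.Digraph (Fin (n + 1) → S)) (hq : 2 < Nat.card S)
    (hwdr : Γ.IsWDR) (hcomm : Γ.IsCommutative)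
    (hund : Γ.underlying = hammingGraph (Fin (n + 1)) S) :
    ∀ (i : Fin (n + 1)) (α : Fin n → S) (x y : lineSet i α),
      (Γ.line i α).outDeg x = (Γ.line i α).outDeg y ∧
      (Γ.line i α).inDeg x = (Γ.line i α).inDeg y := by
  intro i α x y
  obtain ⟨b, hbx, hby⟩ : ∃ b, b ≠ x.1 i ∧ b ≠ y.1 i :=
    ENat.exists_ne_ne_of_three_le (by rw [ENat.card_eq_coe_natCard]; exact_mod_cast hq) _ _
  have hw : i.insertNth b α ∈ lineSet i α := ⟨b, rfl⟩
  have hwx : i.insertNth b α ≠ x.1 := fun h => hbx (by simpa using congrFun h i)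
  have hwy : i.insertNth b α ≠ y.1 := fun h => hby (by simpa using congrFun h i)
  have key {u v} (hu : u ∈ lineSet i α) (hv : v ∈ lineSet i α) (huv : u ≠ v) :=
    card_out_lineSet_eq_card_in_lineSet Γ hwdr hcomm hund hu hv huv
  simp only [Digraph.line, Digraph.outDeg_induce, Digraph.inDeg_induce]
  exact ⟨(key x.2 hw hwx.symm).trans (key y.2 hw hwy.symm).symm,
    (key hw x.2 hwx).symm.trans (key hw y.2 hwy)⟩
end
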